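/- arXiv:1607.01548 — 6 statements merged into one kernel-verified Lean document; each statement's English description precedes it below -/
import Mathlib

section
/- Let ⟨3⟩ := {n ∈ ℕ, n ≥ 1 | ∃ x, y, z ∈ ℕ (allowing 0) with n = x² + y² + z²} be the set of positive integers expressible as a sum of three squares. Then the minimal set of ⟨3⟩ is M(⟨3⟩) = {1, 2, 3, 4, 5, 6, 8, 9, 70, 77}. -/
/-- `Subseq x y` means the decimal digit string of `x` is a subsequence of that of `y`. -/
def Subseq (x y : ℕ) : Prop := (Nat.digits 10 x).Sublist (Nat.digits 10 y)

/-- The minimal set of `S`: elements of `S` containing no smaller element of `S`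
as a subsequence of their decimal digits. -/
def minimalSet (S : Set ℕ) : Set ℕ := {s ∈ S | ¬ ∃ n ∈ S, n < s ∧ Subseq n s}

/-!
A positive integer whose decimal digits contain a nonzero digit other than `7` contains a
smaller sum of three squares, since every digit `d ∈ {1, …, 9} \ {7}` is one. So a minimal
element with at least two digits is written with the digits `0` and `7` alone and, as its
leading digit is `7`, contains `70 = 3² + 5² + 6²` or `77 = 2² + 3² + 8²`. Conversely the
only nonzero proper subsequence of `70` or `77` is `7`, which is not a sum of three squares.
-/

theorem Subseq.length_lt_of_ne {n m : ℕ} (h : Subseq n m) (hne : n ≠ m) :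
    (Nat.digits 10 n).length < (Nat.digits 10 m).length :=
  h.length_le.lt_of_ne fun hlen => hne (Nat.digits_inj_iff.mp (h.eq_of_length hlen))

theorem Subseq.le {n m : ℕ} (h : Subseq n m) : n ≤ m := by
  rcases eq_or_ne n m with rfl | hne
  · rfl
  · calc n ≤ 10 ^ (Nat.digits 10 n).length :=
          ((Nat.digits_length_le_iff (by norm_num) n).mp le_rfl).le
      _ ≤ m := (Nat.lt_digits_length_iff (by norm_num) m).mp (h.length_lt_of_ne hne)

theorem subseq_of_mem_digits {d m : ℕ} (hd : d ∈ Nat.digits 10 m) (hd0 : d ≠ 0) : Subseq d m := by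
  rw [Subseq, Nat.digits_of_lt 10 d hd0 (Nat.digits_lt_base (by norm_num) hd)]
  exact List.singleton_sublist.mpr hd

theorem Subseq.mem_digits {n m : ℕ} (h : Subseq n m) (hlt : n < m)
    (hm : (Nat.digits 10 m).length ≤ 2) (hn : n ≠ 0) : n ∈ Nat.digits 10 m := by
  have hlen : (Nat.digits 10 n).length ≤ 1 := by
    have := h.length_lt_of_ne hlt.ne
    omega
  have hn10 : n < 10 := by simpa using (Nat.digits_length_le_iff (by norm_num) n).mp hlen
  rw [Subseq, Nat.digits_of_lt 10 n hn hn10] at h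
  exact List.singleton_sublist.mp h

theorem exists_pair_sublist_digits {m : ℕ} (hm : 10 ≤ m) :
    ∃ a b, b ≠ 0 ∧ [a, b].Sublist (Nat.digits 10 m) := by
  induction m using Nat.strong_induction_on with
  | _ m ih =>
    rw [Nat.digits_def' (by norm_num) (by omega)]
    rcases lt_or_ge (m / 10) 10 with hlt | hge
    · refine ⟨m % 10, m / 10, by omega, ?_⟩
      rw [Nat.digits_of_lt 10 (m / 10) (by omega) hlt]
    · obtain ⟨a, b, hb, hab⟩ := ih (m / 10) (by omega) hge
      exact ⟨a, b, hb, hab.cons _⟩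

section minimalSet

variable {S : Set ℕ} {s : ℕ}

theorem eq_of_mem_minimalSet_of_subseq (hs : s ∈ minimalSet S) {n : ℕ} (hn : n ∈ S)
    (h : Subseq n s) : n = s :=
  h.le.lt_or_eq.resolve_left fun hlt => hs.2 ⟨n, hn, hlt, h⟩

theorem mem_minimalSet_of_digits (h0 : 0 ∉ S) (hs : s ∈ S) (hlen : (Nat.digits 10 s).length ≤ 2)
    (hdig : ∀ d ∈ Nat.digits 10 s, d < s → d ∉ S) : s ∈ minimalSet S :=
  ⟨hs, fun ⟨n, hn, hlt, h⟩ => hdig n (h.mem_digits hlt hlen (ne_of_mem_of_not_mem hn h0)) hlt hn⟩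

end minimalSet

def sumsOfThreeSquares : Set ℕ := {n : ℕ | 1 ≤ n ∧ ∃ x y z : ℕ, n = x ^ 2 + y ^ 2 + z ^ 2}

theorem zero_notMem_sumsOfThreeSquares : 0 ∉ sumsOfThreeSquares := fun h =>
  Nat.not_succ_le_zero 0 h.1

theorem seven_notMem_sumsOfThreeSquares : 7 ∉ sumsOfThreeSquares := by
  rintro ⟨-, x, y, z, h⟩
  have hx : x < 3 := by nlinarith
  have hy : y < 3 := by nlinarith
  have hz : z < 3 := by nlinarith
  have : ∀ x < 3, ∀ y < 3, ∀ z < 3, 7 ≠ x ^ 2 + y ^ 2 + z ^ 2 := by decide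
  exact this x hx y hy z hz h

theorem mem_sumsOfThreeSquares_of_lt_ten {d : ℕ} (hd0 : d ≠ 0) (hd : d < 10) (hd7 : d ≠ 7) :
    d ∈ sumsOfThreeSquares := by
  have : ∀ d < 10, d ≠ 7 → ∃ x < 4, ∃ y < 4, ∃ z < 4, d = x ^ 2 + y ^ 2 + z ^ 2 := by decide
  obtain ⟨x, -, y, -, z, -, h⟩ := this d hd hd7
  exact ⟨by omega, x, y, z, h⟩

theorem seventy_mem_sumsOfThreeSquares : 70 ∈ sumsOfThreeSquares := ⟨by norm_num, 3, 5, 6, rfl⟩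

theorem seventySeven_mem_sumsOfThreeSquares : 77 ∈ sumsOfThreeSquares :=
  ⟨by norm_num, 2, 3, 8, rfl⟩

theorem minimalSet_sumsOfThreeSquares_subset :
    minimalSet sumsOfThreeSquares ⊆ {1, 2, 3, 4, 5, 6, 8, 9, 70, 77} := by
  intro s hs
  rcases lt_or_ge s 10 with hs10 | hs10
  · have hs7 : s ≠ 7 := by rintro rfl; exact seven_notMem_sumsOfThreeSquares hs.1
    have hs0 : 1 ≤ s := hs.1.1
    interval_cases s <;> simp_all
  · have hdigits : ∀ d ∈ Nat.digits 10 s, d = 0 ∨ d = 7 := by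
      intro d hd
      by_contra! hd07
      have hd10 := Nat.digits_lt_base (by norm_num) hd
      have := eq_of_mem_minimalSet_of_subseq hs
        (mem_sumsOfThreeSquares_of_lt_ten hd07.1 hd10 hd07.2) (subseq_of_mem_digits hd hd07.1)
      omega
    obtain ⟨a, b, hb, hab⟩ := exists_pair_sublist_digits hs10
    obtain rfl : b = 7 := (hdigits b (hab.subset (by simp))).resolve_left hb
    rcases hdigits a (hab.subset (by simp)) with rfl | rfl
    · have := eq_of_mem_minimalSet_of_subseq hs seventy_mem_sumsOfThreeSquares
        (by simpa [Subseq] using hab)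
      simp [← this]
    · have := eq_of_mem_minimalSet_of_subseq hs seventySeven_mem_sumsOfThreeSquares
        (by simpa [Subseq] using hab)
      simp [← this]

theorem subset_minimalSet_sumsOfThreeSquares :
    {1, 2, 3, 4, 5, 6, 8, 9, 70, 77} ⊆ minimalSet sumsOfThreeSquares := by
  intro s hs
  refine mem_minimalSet_of_digits zero_notMem_sumsOfThreeSquares ?_ ?_ ?_ <;>
    rcases hs with rfl | rfl | rfl | rfl | rfl | rfl | rfl | rfl | rfl | rfl <;>
    simp [mem_sumsOfThreeSquares_of_lt_ten, seventy_mem_sumsOfThreeSquares,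
      seventySeven_mem_sumsOfThreeSquares, zero_notMem_sumsOfThreeSquares,
      seven_notMem_sumsOfThreeSquares]

theorem minimalSet_sumThreeSquares :
    minimalSet {n : ℕ | 1 ≤ n ∧ ∃ x y z : ℕ, n = x ^ 2 + y ^ 2 + z ^ 2} =
      {1, 2, 3, 4, 5, 6, 8, 9, 70, 77} :=
  minimalSet_sumsOfThreeSquares_subset.antisymm subset_minimalSet_sumsOfThreeSquares
end

section
/- For every integer ℓ with 3 ≤ ℓ ≤ 10, the number n consisting of ℓ decimal digits 5 followed by one digit 0 (i.e., n = 10·5·(10^ℓ − 1)/9) is not a value of Euler's totient function: there is no x ≥ 1 with φ(x) = n. -/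
/-!
If `φ x ≡ 2 (mod 4)` then `φ x = p ^ k * (p - 1)` for a prime `p`, since every factor of a
coprime splitting `x = a * b` with `a, b > 2` contributes an even totient. For
`n = 2 · 25 · (10 ^ ℓ - 1) / 9` we have `n ≡ 2 (mod 4)`, so `p - 1 ≢ 0 (mod 4)`; this rules out
`p = 5`, hence `25 ∣ p - 1`, and altogether `p ≡ 51 (mod 100)`. So either `k = 0` and `n + 1`
is prime, or `p` is a prime factor of `n` that is `≡ 51 (mod 100)`; for `3 ≤ ℓ ≤ 10` neither
happens.
-/

open Nat

theorem four_dvd_totient_mul {a b : ℕ} (hab : a.Coprime b) (ha : 2 < a) (hb : 2 < b) :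
    4 ∣ φ (a * b) := by
  rw [totient_mul hab]
  exact mul_dvd_mul (totient_even ha).two_dvd (totient_even hb).two_dvd

theorem exists_prime_totient_eq_pow_mul_of_mod_four_eq_two :
    ∀ x : ℕ, φ x % 4 = 2 → ∃ p k, p.Prime ∧ φ x = p ^ k * (p - 1) := by
  refine recOnPosPrimePosCoprime ?_ (by simp) (by simp) ?_
  · intro p n hp hn _
    obtain ⟨k, rfl⟩ := exists_eq_succ_of_ne_zero hn.ne'
    exact ⟨p, k, hp, totient_prime_pow_succ hp k⟩
  · intro a b ha hb hab iha ihb h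
    rcases (show a = 2 ∨ b = 2 ∨ (2 < a ∧ 2 < b) by omega) with rfl | rfl | ⟨ha2, hb2⟩
    · rw [totient_mul hab, totient_two, one_mul] at h ⊢
      exact ihb h
    · rw [totient_mul hab, totient_two, mul_one] at h ⊢
      exact iha h
    · have := four_dvd_totient_mul hab ha2 hb2
      omega

theorem Nat.Prime.mod_hundred_eq_of_pow_mul_pred {p k : ℕ} (hp : p.Prime)
    (h4 : p ^ k * (p - 1) % 4 = 2) (h25 : 25 ∣ p ^ k * (p - 1)) : p % 100 = 51 := by
  have hp5 : p ≠ 5 := by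
    rintro rfl
    simp at h4
  have h25p : 25 ∣ p - 1 :=
    (Coprime.pow 2 k ((coprime_primes prime_five hp).mpr hp5.symm)).dvd_of_dvd_mul_left h25
  have h4p : ¬ 4 ∣ p - 1 := fun h => by
    have := h.mul_left (p ^ k)
    omega
  rcases hp.eq_two_or_odd with rfl | hodd <;> omega

theorem totient_ne_of_mod_four_eq_two {n : ℕ} (h4 : n % 4 = 2) (h25 : 25 ∣ n)
    (hsucc : ¬ (n + 1).Prime) (hfactors : ∀ p ∈ n.primeFactorsList, p % 100 ≠ 51) (x : ℕ) :
    φ x ≠ n := by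
  intro hx
  obtain ⟨p, k, hp, hpk⟩ := exists_prime_totient_eq_pow_mul_of_mod_four_eq_two x (hx ▸ h4)
  rw [hx] at hpk
  have h51 := hp.mod_hundred_eq_of_pow_mul_pred (hpk ▸ h4) (hpk ▸ h25)
  rcases k with _ | k
  · rw [pow_zero, one_mul] at hpk
    have hsucc_eq : n + 1 = p := by have := hp.two_le; omega
    exact hsucc (hsucc_eq ▸ hp)
  · refine hfactors p ((mem_primeFactorsList (by omega)).mpr ⟨hp, ?_⟩) h51
    exact ⟨p ^ k * (p - 1), by rw [hpk]; ring⟩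

theorem repfive_zero_not_totient_value (ℓ : ℕ) (h3 : 3 ≤ ℓ) (h10 : ℓ ≤ 10) :
    ¬ ∃ x : ℕ, 1 ≤ x ∧ Nat.totient x = 10 * 5 * (10 ^ ℓ - 1) / 9 := by
  rintro ⟨x, -, hx⟩
  interval_cases ℓ <;>
    exact totient_ne_of_mod_four_eq_two (by norm_num) (by norm_num) (by norm_num)
      (by norm_num only; simp [primeFactorsList_ofNat]) x hx
end

section
/- Let S := {n ∈ ℕ | n ≡ 2 (mod 10), n ≥ 2} = 2 + 10ℕ₀ and T := {n ∈ ℕ | n ≡ 3 (mod 10), n ≥ 3} = 3 + 10ℕ₀. Then M(S ∪ T) = M(S) ∪ M(T); that is, the inclusion M(S ∪ T) ⊆ M(S) ∪ M(T) can hold with equality. -/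
theorem minimalSet_union_subset (S T : Set ℕ) :
    minimalSet (S ∪ T) ⊆ minimalSet S ∪ minimalSet T := by
  rintro s ⟨hs | hs, hmin⟩
  · exact Or.inl ⟨hs, fun ⟨n, hn, hlt, hsub⟩ => hmin ⟨n, Or.inl hn, hlt, hsub⟩⟩
  · exact Or.inr ⟨hs, fun ⟨n, hn, hlt, hsub⟩ => hmin ⟨n, Or.inr hn, hlt, hsub⟩⟩

theorem minimalSet_eq_singleton {S : Set ℕ} {a : ℕ} (ha : a ∈ S)
    (h : ∀ s ∈ S, a ≤ s ∧ Subseq a s) : minimalSet S = {a} := by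
  ext s
  constructor
  · rintro ⟨hs, hmin⟩
    obtain ⟨hle, hsub⟩ := h s hs
    by_contra hne
    exact hmin ⟨a, ha, lt_of_le_of_ne hle (Ne.symm hne), hsub⟩
  · rintro rfl
    exact ⟨ha, fun ⟨n, hn, hlt, _⟩ => (h n hn).1.not_gt hlt⟩

theorem subseq_add_ten_mul {d : ℕ} (hd0 : d ≠ 0) (hd : d < 10) (k : ℕ) :
    Subseq d (d + 10 * k) := by
  rw [Subseq, Nat.digits_of_lt 10 d hd0 hd, Nat.digits_add 10 (by norm_num) d k hd (Or.inl hd0)]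
  exact (List.nil_sublist _).cons_cons d

theorem minimalSet_residue_class {d : ℕ} (hd0 : d ≠ 0) (hd : d < 10) :
    minimalSet {n : ℕ | ∃ k : ℕ, n = d + 10 * k} = {d} :=
  minimalSet_eq_singleton ⟨0, rfl⟩ fun _ ⟨k, hk⟩ =>
    hk ▸ ⟨Nat.le_add_right d _, subseq_add_ten_mul hd0 hd k⟩

theorem minimalSet_union_eq_example :
    minimalSet ({n : ℕ | ∃ k : ℕ, n = 2 + 10 * k} ∪ {n : ℕ | ∃ k : ℕ, n = 3 + 10 * k}) =
      minimalSet {n : ℕ | ∃ k : ℕ, n = 2 + 10 * k} ∪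
        minimalSet {n : ℕ | ∃ k : ℕ, n = 3 + 10 * k} := by
  refine (minimalSet_union_subset _ _).antisymm ?_
  rw [minimalSet_residue_class (by norm_num) (by norm_num),
    minimalSet_residue_class (by norm_num) (by norm_num)]
  rintro s (rfl | rfl)
  · refine ⟨Or.inl ⟨0, rfl⟩, ?_⟩
    rintro ⟨n, (⟨k, rfl⟩ | ⟨k, rfl⟩), hlt, -⟩ <;> omega
  · refine ⟨Or.inr ⟨0, rfl⟩, ?_⟩
    rintro ⟨n, (⟨k, rfl⟩ | ⟨k, rfl⟩), hlt, hsub⟩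
    · obtain rfl : k = 0 := by omega
      exact absurd hsub (by simp [Subseq])
    · omega
end

section
/- Let S := {p ∈ ℕ | p prime} and T := {n ∈ ℕ | n ≡ 1 (mod 4)}. Then M(S ∩ T) is not a subset of M(S) ∩ M(T); that is, the inclusion M(S ∩ T) ⊆ M(S) ∩ M(T) fails in general. -/
theorem not_mem_minimalSet_of_subseq {S : Set ℕ} {n s : ℕ} (hn : n ∈ S) (hlt : n < s)
    (hns : Subseq n s) : s ∉ minimalSet S :=
  fun hs => hs.2 ⟨n, hn, hlt, hns⟩

theorem subseq_three_thirteen : Subseq 3 13 := by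
  simp [Subseq]

theorem not_subseq_five_thirteen : ¬ Subseq 5 13 := by
  simp [Subseq]

theorem eq_five_of_prime_of_mod_four_eq_one_of_lt_thirteen {n : ℕ} (hp : n.Prime)
    (hn : n % 4 = 1) (hlt : n < 13) : n = 5 := by
  interval_cases n <;> first | omega | norm_num at hp

theorem thirteen_mem_minimalSet_prime_inter_mod_four_eq_one :
    13 ∈ minimalSet ({p : ℕ | p.Prime} ∩ {n : ℕ | n % 4 = 1}) := by
  refine ⟨⟨by norm_num, rfl⟩, ?_⟩
  rintro ⟨n, ⟨hp, hn⟩, hlt, hns⟩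
  obtain rfl := eq_five_of_prime_of_mod_four_eq_one_of_lt_thirteen hp hn hlt
  exact not_subseq_five_thirteen hns

theorem thirteen_not_mem_minimalSet_prime : 13 ∉ minimalSet {p : ℕ | p.Prime} :=
  not_mem_minimalSet_of_subseq Nat.prime_three (by norm_num) subseq_three_thirteen

theorem minimalSet_inter_not_subset_inter :
    ¬ minimalSet ({p : ℕ | p.Prime} ∩ {n : ℕ | n % 4 = 1}) ⊆
        minimalSet {p : ℕ | p.Prime} ∩ minimalSet {n : ℕ | n % 4 = 1} := fun h =>
  thirteen_not_mem_minimalSet_prime (h thirteen_mem_minimalSet_prime_inter_mod_four_eq_one).1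
end

section
/- Let S := {n ∈ ℕ | ∃ k ≥ 1, n = 7 + 10k} (i.e., S = 7 + 10ℕ = {17, 27, 37, ...}) and T := {p ∈ ℕ | p prime}. Then M(S ∩ T) is not a subset of M(S) ∪ M(T); that is, even the inclusion M(S ∩ T) ⊆ M(S) ∪ M(T) fails in general. -/
theorem Subseq.mem_map_sublists {x y : ℕ} (h : Subseq x y) :
    x ∈ (Nat.digits 10 y).sublists.map (Nat.ofDigits 10) :=
  List.mem_map.2 ⟨_, List.mem_sublists.2 h, Nat.ofDigits_digits 10 x⟩

theorem mem_minimalSet_of_forall_sublists {S : Set ℕ} {s : ℕ} (hs : s ∈ S)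
    (h : ∀ n ∈ (Nat.digits 10 s).sublists.map (Nat.ofDigits 10), n < s → n ∉ S) :
    s ∈ minimalSet S :=
  ⟨hs, fun ⟨n, hn, hlt, hsub⟩ => h n hsub.mem_map_sublists hlt hn⟩

theorem notMem_minimalSet_of_subseq {S : Set ℕ} {n s : ℕ} (hn : n ∈ S) (hlt : n < s)
    (h : Subseq n s) : s ∉ minimalSet S :=
  fun hs => hs.2 ⟨n, hn, hlt, h⟩

theorem mem_setOf_seven_add_ten_mul_iff {n : ℕ} :
    n ∈ {n : ℕ | ∃ k : ℕ, 1 ≤ k ∧ n = 7 + 10 * k} ↔ n % 10 = 7 ∧ 7 < n := by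
  constructor
  · rintro ⟨k, hk, rfl⟩
    omega
  · rintro ⟨h7, hlt⟩
    exact ⟨n / 10, by omega, by omega⟩

theorem minimalSet_inter_not_subset_union :
    ¬ minimalSet ({n : ℕ | ∃ k : ℕ, 1 ≤ k ∧ n = 7 + 10 * k} ∩ {p : ℕ | p.Prime}) ⊆
        minimalSet {n : ℕ | ∃ k : ℕ, 1 ≤ k ∧ n = 7 + 10 * k} ∪
          minimalSet {p : ℕ | p.Prime} := by
  intro h
  have h587 : 587 ∈ minimalSet
      ({n : ℕ | ∃ k : ℕ, 1 ≤ k ∧ n = 7 + 10 * k} ∩ {p : ℕ | p.Prime}) := by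
    refine mem_minimalSet_of_forall_sublists ⟨⟨58, by norm_num⟩, by norm_num⟩ ?_
    rw [show Nat.digits 10 587 = [7, 8, 5] by norm_num]
    simp only [Set.mem_inter_iff, mem_setOf_seven_add_ten_mul_iff]
    simp only [Set.mem_ofPred_eq]
    decide
  rcases h h587 with hS | hT
  · exact notMem_minimalSet_of_subseq (n := 57) (mem_setOf_seven_add_ten_mul_iff.2 (by norm_num))
      (by norm_num) (by norm_num [Subseq]) hS
  · exact notMem_minimalSet_of_subseq Nat.prime_seven (by norm_num) (by norm_num [Subseq]) hT
end

section
/- Let Perfect := {n ∈ ℕ, n ≥ 1 | n equals the sum of its proper divisors} be the set of perfect numbers. If every perfect number is even (i.e., there exists no odd perfect number), then M(Perfect) = {6, 28}. -/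
open ArithmeticFunction ArithmeticFunction.sigma Finset in
lemma aux_sigma_two_pow_eq_mersenne_succ (k : ℕ) : σ 1 (2 ^ k) = mersenne (k + 1) := by
  simp_rw [sigma_one_apply, mersenne, show 2 = 1 + 1 from rfl, ← geom_sum_mul_add 1 (k + 1)]
  norm_num

lemma aux_eq_two_pow_mul_odd {n : ℕ} (hpos : 0 < n) : ∃ k m : ℕ, n = 2 ^ k * m ∧ ¬Even m := by
  have h := Nat.finiteMultiplicity_iff.2 ⟨Nat.prime_two.ne_one, hpos⟩
  cases' pow_multiplicity_dvd 2 n with m hm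
  use multiplicity 2 n, m
  refine ⟨hm, ?_⟩
  rw [even_iff_two_dvd]
  have hg := h.not_pow_dvd_of_multiplicity_lt (Nat.lt_succ_self _)
  contrapose! hg
  rcases hg with ⟨k, rfl⟩
  apply Dvd.intro k
  rw [pow_succ, mul_assoc, ← hm]

open ArithmeticFunction Nat in
/-- Euler's direction of the Euclid–Euler theorem (copied from the Mathlib archive). -/
lemma aux_eq_two_pow_mul_prime_mersenne_of_even_perfect {n : ℕ} (ev : Even n)
    (perf : Nat.Perfect n) :
    ∃ k : ℕ, Nat.Prime (mersenne (k + 1)) ∧ n = 2 ^ k * mersenne (k + 1) := by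
  have hpos := perf.2
  rcases aux_eq_two_pow_mul_odd hpos with ⟨k, m, rfl, hm⟩
  use k
  rw [even_iff_two_dvd] at hm
  rw [Nat.perfect_iff_sum_divisors_eq_two_mul hpos, ← sigma_one_apply,
    isMultiplicative_sigma.map_mul_of_coprime (Nat.prime_two.coprime_pow_of_not_dvd hm).symm,
    aux_sigma_two_pow_eq_mersenne_succ, ← mul_assoc, ← pow_succ'] at perf
  obtain ⟨j, rfl⟩ := ((Odd.coprime_two_right (by simp)).pow_right _).dvd_of_dvd_mul_left
    (Dvd.intro _ perf)
  rw [← mul_assoc, mul_comm _ (mersenne _), mul_assoc] at perf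
  have h := mul_left_cancel₀ (by positivity) perf
  rw [sigma_one_apply, Nat.sum_divisors_eq_sum_properDivisors_add_self, ← succ_mersenne, add_mul,
    one_mul, add_comm] at h
  have hj := add_left_cancel h
  cases Nat.sum_properDivisors_dvd (by rw [hj]; apply Dvd.intro_left (mersenne (k + 1)) rfl) with
  | inl h_1 =>
    have j1 : j = 1 := Eq.trans hj.symm h_1
    rw [j1, mul_one, Nat.sum_properDivisors_eq_one_iff_prime] at h_1
    simp [h_1, j1]
  | inr h_1 =>
    have jcon := Eq.trans hj.symm h_1
    rw [← one_mul j, ← mul_assoc, mul_one] at jcon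
    have jcon2 := mul_right_cancel₀ ?_ jcon
    · exfalso
      match k with
      | 0 =>
        apply hm
        rw [← jcon2, pow_zero, one_mul, one_mul] at ev
        rw [← jcon2, one_mul]
        exact even_iff_two_dvd.mp ev
      | .succ k =>
        apply _root_.ne_of_lt _ jcon2
        simp only [mersenne]
        rw [← Nat.pred_eq_sub_one, Nat.lt_pred_iff, ← pow_one (Nat.succ 1)]
        apply pow_lt_pow_right₀ (Nat.lt_succ_self 1) (Nat.succ_lt_succ k.succ_pos)
    contrapose! hm
    simp [hm]

lemma aux_subseq6 {n : ℕ} (h : n % 10 = 6) : Subseq 6 n := by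
  have hn : 0 < n := by omega
  unfold Subseq
  rw [Nat.digits_def' (by norm_num : (1:ℕ) < 10) hn, h,
    show Nat.digits 10 6 = [6] by norm_num]
  exact List.singleton_sublist.mpr List.mem_cons_self

lemma aux_subseq28 {n : ℕ} (h : n % 100 = 28) : Subseq 28 n := by
  have h10 : n % 10 = 8 := by omega
  have h2 : (n / 10) % 10 = 2 := by omega
  have hn : 0 < n := by omega
  have hn1 : 0 < n / 10 := by omega
  unfold Subseq
  rw [show Nat.digits 10 28 = [8, 2] by norm_num,
    Nat.digits_def' (by norm_num : (1:ℕ) < 10) hn, h10,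
    Nat.digits_def' (by norm_num : (1:ℕ) < 10) hn1, h2]
  exact List.Sublist.cons₂ _ (List.Sublist.cons₂ _ (List.nil_sublist _))

lemma aux_pow_mod10 (m : ℕ) : 2 ^ (4 * (m + 1)) % 10 = 6 := by
  induction m with
  | zero => norm_num
  | succ m ih =>
    have e : 2 ^ (4 * (m + 1 + 1)) = 2 ^ (4 * (m + 1)) * 16 := by
      rw [show 4 * (m + 1 + 1) = 4 * (m + 1) + 4 from by ring, pow_add]; norm_num
    omega

lemma aux_pow_mod20 (m : ℕ) : 2 ^ (4 * m + 2) % 20 = 4 := by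
  induction m with
  | zero => norm_num
  | succ m ih =>
    have e : 2 ^ (4 * (m + 1) + 2) = 2 ^ (4 * m + 2) * 16 := by
      rw [show 4 * (m + 1) + 2 = (4 * m + 2) + 4 from by ring, pow_add]; norm_num
    omega

lemma aux_mod10 (m : ℕ) : (2 ^ (4 * (m + 1)) * (2 ^ (4 * (m + 1) + 1) - 1)) % 10 = 6 := by
  set k := 4 * (m + 1) with hk
  have hx : 2 ^ k % 10 = 6 := aux_pow_mod10 m
  obtain ⟨j, hj⟩ : ∃ j, 2 ^ k = 10 * j + 6 := ⟨2 ^ k / 10, by omega⟩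
  have h1 : 2 ^ (k + 1) - 1 = 20 * j + 11 := by rw [pow_succ]; omega
  rw [h1, hj, show (10 * j + 6) * (20 * j + 11) = 10 * (20 * (j * j) + 23 * j + 6) + 6 from
    by ring]
  omega

lemma aux_mod100 (m : ℕ) : (2 ^ (4 * m + 2) * (2 ^ ((4 * m + 2) + 1) - 1)) % 100 = 28 := by
  set k := 4 * m + 2 with hk
  have hx : 2 ^ k % 20 = 4 := aux_pow_mod20 m
  obtain ⟨j, hj⟩ : ∃ j, 2 ^ k = 20 * j + 4 := ⟨2 ^ k / 20, by omega⟩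
  have h1 : 2 ^ (k + 1) - 1 = 40 * j + 7 := by rw [pow_succ]; omega
  rw [h1, hj, show (20 * j + 4) * (40 * j + 7) = 100 * (8 * (j * j) + 3 * j) + 28 from by ring]
  omega

lemma aux_perfect6 : Nat.Perfect 6 := ⟨by decide, by norm_num⟩

lemma aux_perfect28 : Nat.Perfect 28 := ⟨by decide, by norm_num⟩

lemma aux_not_perfect_lt28 {n : ℕ} (h1 : 1 ≤ n) (h2 : n < 28) (h6 : n ≠ 6) :
    ¬ Nat.Perfect n := by
  rintro ⟨hsum, -⟩
  interval_cases n <;> revert hsum <;> first | decide | (exact fun _ => h6 rfl)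

lemma aux_not_subseq_6_28 : ¬ Subseq 6 28 := by
  show ¬ (Nat.digits 10 6).Sublist (Nat.digits 10 28)
  rw [show Nat.digits 10 6 = [6] from by norm_num,
    show Nat.digits 10 28 = [8, 2] from by norm_num]
  decide

/-- `k + 1` must be odd (or `k = 1`) if `mersenne (k+1)` is prime, for `k ≥ 2`. -/
lemma aux_k_even {k : ℕ} (hk : 2 ≤ k) (pr : Nat.Prime (mersenne (k + 1))) : Even k := by
  by_contra hodd
  -- k odd, k ≥ 3, so k + 1 = 2 * m and 3 ∣ 2^(k+1) - 1
  obtain ⟨m, hm⟩ : ∃ m, k + 1 = 2 * m := by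
    rw [Nat.not_even_iff] at hodd; exact ⟨(k + 1) / 2, by omega⟩
  have h3 : 2 ^ (k + 1) % 3 = 1 := by
    rw [hm, pow_mul, Nat.pow_mod]; norm_num
  have hdvd : 3 ∣ mersenne (k + 1) := by
    have : 1 ≤ 2 ^ (k + 1) := Nat.one_le_two_pow
    unfold mersenne; omega
  have h15 : 15 ≤ mersenne (k + 1) := by
    have : 2 ^ 4 ≤ 2 ^ (k + 1) := Nat.pow_le_pow_right (by norm_num) (by omega)
    unfold mersenne at *; omega
  have := (Nat.Prime.eq_one_or_self_of_dvd pr 3 hdvd)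
  omega

theorem minimalSet_perfect_of_no_odd_perfect
    (h : ∀ n : ℕ, Nat.Perfect n → Even n) :
    minimalSet {n : ℕ | 1 ≤ n ∧ Nat.Perfect n} = {6, 28} := by
  ext s
  simp only [minimalSet, Set.mem_setOf_eq, Set.mem_sep_iff, Set.mem_insert_iff,
    Set.mem_singleton_iff]
  constructor
  · rintro ⟨⟨hs1, hperf⟩, hmin⟩
    by_contra hne
    push_neg at hne
    obtain ⟨hne6, hne28⟩ := hne
    obtain ⟨k, pr, hk⟩ := aux_eq_two_pow_mul_prime_mersenne_of_even_perfect (h s hperf) hperf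
    -- k = 0 impossible, k = 1 gives 6, k = 2 gives 28
    have hk0 : k ≠ 0 := by
      intro h0; rw [h0] at pr; norm_num [mersenne] at pr
    have hk1 : k ≠ 1 := by
      intro h1; rw [h1] at hk; exact hne6 (by simpa [mersenne] using hk)
    have hk2 : k ≠ 2 := by
      intro h2; rw [h2] at hk; exact hne28 (by simpa [mersenne] using hk)
    have hkev : Even k := aux_k_even (by omega) pr
    obtain ⟨t, ht⟩ := hkev
    have hmer : mersenne (k + 1) = 2 ^ (k + 1) - 1 := rfl
    rcases Nat.even_or_odd t with ⟨m, hm⟩ | ⟨m, hm⟩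
    · -- k = 4 * m, m ≥ 1 : s ends in 6
      have hkm : k = 4 * ((m - 1) + 1) := by omega
      have hs6 : s % 10 = 6 := by
        rw [hk, hmer, hkm]; exact aux_mod10 (m - 1)
      have hsge : 16 ≤ s := by
        have h1 : 2 ^ 4 ≤ 2 ^ k := Nat.pow_le_pow_right (by norm_num) (by omega)
        have h2 : 1 ≤ mersenne (k + 1) := pr.one_lt.le.trans' (by norm_num)
        calc 16 = 2 ^ 4 * 1 := by norm_num
        _ ≤ 2 ^ k * mersenne (k + 1) := Nat.mul_le_mul h1 pr.one_lt.le
        _ = s := hk.symm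
      exact hmin ⟨6, ⟨by norm_num, aux_perfect6⟩, by omega, aux_subseq6 hs6⟩
    · -- k = 4 * m + 2, m ≥ 1 : s ends in 28
      have hkm : k = 4 * m + 2 := by omega
      have hs28 : s % 100 = 28 := by
        rw [hk, hmer, hkm]; exact aux_mod100 m
      have hsge : 64 ≤ s := by
        have h1 : 2 ^ 6 ≤ 2 ^ k := Nat.pow_le_pow_right (by norm_num) (by omega)
        calc 64 = 2 ^ 6 * 1 := by norm_num
        _ ≤ 2 ^ k * mersenne (k + 1) := Nat.mul_le_mul h1 pr.one_lt.le
        _ = s := hk.symm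
      exact hmin ⟨28, ⟨by norm_num, aux_perfect28⟩, by omega, aux_subseq28 hs28⟩
  · rintro (rfl | rfl)
    · refine ⟨⟨by norm_num, aux_perfect6⟩, ?_⟩
      rintro ⟨n, ⟨hn1, hperf⟩, hlt, -⟩
      exact aux_not_perfect_lt28 hn1 (by omega) (by omega) hperf
    · refine ⟨⟨by norm_num, aux_perfect28⟩, ?_⟩
      rintro ⟨n, ⟨hn1, hperf⟩, hlt, hsub⟩
      rcases eq_or_ne n 6 with rfl | hn6
      · exact aux_not_subseq_6_28 hsub
      · exact aux_not_perfect_lt28 hn1 hlt hn6 hperf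
end
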